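/- For every gamma in R whose components are (n, 0, S, eta, a, s) (i.e. gamma is of fibre degree zero, x = 0), one has Td(N)·Shat(gamma) = M(gamma); that is, the Td(N)-twisted cohomological inverse fibrewise Fourier–Mukai transform sends the component vector (n, 0, S, eta, a, s) to (0, −n, eta, −S, s, −a), acting by the adiabatic block-antidiagonal matrix M. -/

import Mathlib

/-!
Model `R` of the vertical even rational cohomology of an elliptically fibered
Calabi–Yau threefold `π : X → B` with section `σ`.  An element
`γ = n·1 + x·σ + S + σ·η + a·F + s·σF` (with `n, x, a, s ∈ ℚ` and `S, η ∈ A2`,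
where `A2` models `H²(B)` with intersection form `B` and `c1` models `π*c1(B)`)
is recorded by its components `(n, x, S, η, a, s)`.
-/
structure R6 (A2 : Type*) where
  n : ℚ
  x : ℚ
  S : A2
  eta : A2
  a : ℚ
  s : ℚ

namespace R6

variable {A2 : Type*} [AddCommGroup A2] [Module ℚ A2]

/-- The multiplication of `R`, induced by the relations `S·S' = ⟨S,S'⟩·F` for
`S, S' ∈ A2`, `F·A2 = 0`, `F² = 0` and `σ² = −c1·σ`. -/
def mul (B : A2 →ₗ[ℚ] A2 →ₗ[ℚ] ℚ) (c1 : A2) (γ γ' : R6 A2) : R6 A2 where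
  n := γ.n * γ'.n
  x := γ.n * γ'.x + γ.x * γ'.n
  S := γ.n • γ'.S + γ'.n • γ.S
  eta := γ.n • γ'.eta + γ'.n • γ.eta + γ.x • γ'.S + γ'.x • γ.S - (γ.x * γ'.x) • c1
  a := γ.n * γ'.a + γ'.n * γ.a + B γ.S γ'.S
  s := γ.n * γ'.s + γ'.n * γ.s + γ.x * γ'.a + γ'.x * γ.a
      - γ.x * B c1 γ'.eta - γ'.x * B c1 γ.eta + B γ.S γ'.eta + B γ'.S γ.eta

end R6

namespace R6

variable {A2 : Type*} [AddCommGroup A2] [Module ℚ A2]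

/-- Todd class of the normal bundle of the section:
`Td(N) = 1 − c1/2 + c1²/12`, with `c1² = ⟨c1,c1⟩·F`. -/
def TdN (B : A2 →ₗ[ℚ] A2 →ₗ[ℚ] ℚ) (c1 : A2) : R6 A2 :=
  ⟨1, 0, (-(1/2) : ℚ) • c1, 0, B c1 c1 / 12, 0⟩

/-- Chern character of the inverse relative Fourier–Mukai transform. -/
def Shat (B : A2 →ₗ[ℚ] A2 →ₗ[ℚ] ℚ) (c1 : A2) (γ : R6 A2) : R6 A2 :=
  ⟨γ.x, -γ.n, γ.eta + (γ.x / 2) • c1, -((γ.n / 2) • c1) - γ.S,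
   γ.s + B γ.eta c1 / 2 + (γ.x / 12) * B c1 c1,
   -(γ.n / 6) * B c1 c1 - γ.a - B c1 γ.S / 2 + γ.x * B c1 c1⟩

/-- The adiabatic block-antidiagonal matrix `M`: the ℚ-linear map on `R` sending
components `(n, x, S, η, a, s)` to `(x, −n, η, −S, s, −a)`. -/
def Mmap (γ : R6 A2) : R6 A2 := ⟨γ.x, -γ.n, γ.eta, -γ.S, γ.s, -γ.a⟩

end R6

/-!
Multiplication by `Td(N)` is unipotent, and for `x = 0` its correction terms
`−(c1/2)·Ŝ(γ)` and `(c1²/12)·Ŝ(γ)` cancel exactly the `c1`-terms of `Ŝ(γ)`; in the `F`-component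
this cancellation is `⟨η, c1⟩ = ⟨c1, η⟩`.
-/

namespace R6

@[ext]
theorem ext {A2 : Type*} {γ γ' : R6 A2} (hn : γ.n = γ'.n) (hx : γ.x = γ'.x) (hS : γ.S = γ'.S)
    (heta : γ.eta = γ'.eta) (ha : γ.a = γ'.a) (hs : γ.s = γ'.s) : γ = γ' := by
  cases γ; cases γ'; congr

variable {A2 : Type*} [AddCommGroup A2] [Module ℚ A2]

theorem tdN_mul (B : A2 →ₗ[ℚ] A2 →ₗ[ℚ] ℚ) (c1 : A2) (γ : R6 A2) :
    mul B c1 (TdN B c1) γ =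
      ⟨γ.n, γ.x, γ.S - (γ.n / 2) • c1, γ.eta - (γ.x / 2) • c1,
        γ.a + γ.n * B c1 c1 / 12 - B c1 γ.S / 2, γ.s + γ.x * B c1 c1 / 12 - B c1 γ.eta / 2⟩ := by
  ext
  case hS | heta => simp only [mul, TdN]; module
  case hn | hx | ha | hs =>
    simp only [mul, TdN, map_smul, map_zero, LinearMap.smul_apply, smul_eq_mul]; ring

end R6

/-- For every `γ` in `R` of fibre degree zero (`x = 0`), one has
`Td(N)·Ŝ(γ) = M(γ)`:  the `Td(N)`-twisted cohomological inverse fibrewise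
Fourier–Mukai transform sends `(n, 0, S, η, a, s)` to `(0, −n, η, −S, s, −a)`,
acting by the adiabatic block-antidiagonal matrix `M`. -/
theorem tdN_mul_shat_eq_M {A2 : Type*} [AddCommGroup A2] [Module ℚ A2]
    (B : A2 →ₗ[ℚ] A2 →ₗ[ℚ] ℚ) (hB : ∀ u v : A2, B u v = B v u) (c1 : A2)
    (γ : R6 A2) (hx : γ.x = 0) :
    R6.mul B c1 (R6.TdN B c1) (R6.Shat B c1 γ) = R6.Mmap γ := by
  rw [R6.tdN_mul]
  ext
  case hn | hx => rfl
  case hS | heta => simp only [R6.Shat, R6.Mmap, hx]; module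
  case ha | hs =>
    simp only [R6.Shat, R6.Mmap, hx, map_add, map_sub, map_neg, map_smul, smul_eq_mul, hB γ.eta c1]
    ring
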